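/- arXiv:2502.19012 — 5 statements merged into one kernel-verified Lean document; each statement's English description precedes it below -/
import Mathlib

section
/- Let a ∈ ℝⁿ, β ∈ ℝ, and l, u ∈ ℝⁿ with l ≤ u componentwise, and let k be an index with a_k > 0. Then every x ∈ ℝⁿ satisfying l ≤ x ≤ u componentwise and ⟨a, x⟩ ≤ β also satisfies the implied upper bound x_k ≤ l_k + (β − act₋(a, l, u)) / a_k. -/
/-- Dot product of two vectors in ℝⁿ. -/
def dotProd {n : ℕ} (a x : Fin n → ℝ) : ℝ := ∑ j, a j * x j

/-- Minimal activity of a row `a` over the box `[l, u]`. -/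
noncomputable def minActivity {n : ℕ} (a l u : Fin n → ℝ) : ℝ :=
  ∑ j, if 0 ≤ a j then a j * l j else a j * u j

/-- Soundness of the implied-upper-bound update in activity-based bound propagation:
if `a_k > 0`, every `x` in the box `[l, u]` with `⟨a, x⟩ ≤ β` satisfies
`x_k ≤ l_k + (β − act₋(a, l, u)) / a_k`. -/
theorem implied_upper_bound {n : ℕ} (a l u : Fin n → ℝ) (β : ℝ) (k : Fin n)
    (hlu : ∀ j, l j ≤ u j) (hak : 0 < a k) :
    ∀ x : Fin n → ℝ, (∀ j, l j ≤ x j) → (∀ j, x j ≤ u j) → dotProd a x ≤ β →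
      x k ≤ l k + (β - minActivity a l u) / a k := by
  intro x hl hu hdot
  have key : a k * (x k - l k) ≤ β - minActivity a l u := by
    have h1 : ∀ j, (if 0 ≤ a j then a j * l j else a j * u j) ≤ a j * x j := by
      intro j
      split_ifs with h
      · exact mul_le_mul_of_nonneg_left (hl j) h
      · exact mul_le_mul_of_nonpos_left (hu j) (le_of_not_ge h)
    have hsum : ∑ j ∈ Finset.univ.erase k, (if 0 ≤ a j then a j * l j else a j * u j)
        ≤ ∑ j ∈ Finset.univ.erase k, a j * x j :=
      Finset.sum_le_sum fun j _ => h1 j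
    have e1 : minActivity a l u = a k * l k
        + ∑ j ∈ Finset.univ.erase k, (if 0 ≤ a j then a j * l j else a j * u j) := by
      rw [minActivity, ← Finset.add_sum_erase _ _ (Finset.mem_univ k), if_pos hak.le]
    have e2 : dotProd a x = a k * x k + ∑ j ∈ Finset.univ.erase k, a j * x j := by
      rw [dotProd, ← Finset.add_sum_erase _ _ (Finset.mem_univ k)]
    rw [e2] at hdot
    nlinarith [hsum]
  rw [mul_comm] at key
  have h2 : x k - l k ≤ (β - minActivity a l u) / a k := (le_div_iff₀ hak).mpr key
  linarith
end

section
/- Let a ∈ ℝⁿ, β ∈ ℝ, and l, u ∈ ℝⁿ with l ≤ u componentwise, and let k be an index with a_k < 0. Then every x ∈ ℝⁿ satisfying l ≤ x ≤ u componentwise and ⟨a, x⟩ ≤ β also satisfies the implied lower bound x_k ≥ u_k + (β − act₋(a, l, u)) / a_k. -/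
/-- Soundness of the implied-lower-bound update in activity-based bound propagation:
if `a_k < 0`, every `x` in the box `[l, u]` with `⟨a, x⟩ ≤ β` satisfies
`x_k ≥ u_k + (β − act₋(a, l, u)) / a_k`. -/
theorem implied_lower_bound {n : ℕ} (a l u : Fin n → ℝ) (β : ℝ) (k : Fin n)
    (hlu : ∀ j, l j ≤ u j) (hak : a k < 0) :
    ∀ x : Fin n → ℝ, (∀ j, l j ≤ x j) → (∀ j, x j ≤ u j) → dotProd a x ≤ β →
      u k + (β - minActivity a l u) / a k ≤ x k := by
  intro x hl hu hdot
  have hm : ∀ j, (if 0 ≤ a j then a j * l j else a j * u j) ≤ a j * x j := by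
    intro j
    split
    · exact mul_le_mul_of_nonneg_left (hl j) (by assumption)
    · exact mul_le_mul_of_nonpos_left (hu j) (le_of_lt (lt_of_not_ge (by assumption)))
  have hkey : minActivity a l u - (a k * u k) + a k * x k ≤ dotProd a x := by
    have h1 : minActivity a l u - (if 0 ≤ a k then a k * l k else a k * u k)
        ≤ dotProd a x - a k * x k := by
      rw [minActivity, dotProd, ← Finset.sum_erase_eq_sub (Finset.mem_univ k),
        ← Finset.sum_erase_eq_sub (Finset.mem_univ k)]
      exact Finset.sum_le_sum fun j _ => hm j
    rw [if_neg (not_le.mpr hak)] at h1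
    linarith
  have hxk : a k * x k ≤ β - minActivity a l u + a k * u k := by linarith
  have h2 : (β - minActivity a l u) / a k ≤ x k - u k := by
    rw [div_le_iff_of_neg hak]; nlinarith
  linarith
end

section
/- Let a ∈ ℝⁿ, β ∈ ℝ, and l, u ∈ ℝⁿ with l ≤ u componentwise, and let k be an index with a_k > 0. Then every x ∈ ℝⁿ satisfying l ≤ x ≤ u componentwise, ⟨a, x⟩ ≤ β, and x_k ∈ ℤ (i.e., x_k is the image of an integer) also satisfies the rounded implied bound x_k ≤ ⌊l_k + (β − act₋(a, l, u)) / a_k⌋. -/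
/-- Soundness of the integer rounding step applied to the implied upper bound:
if `a_k > 0`, every `x` in the box `[l, u]` with `⟨a, x⟩ ≤ β` whose `k`-th
component is integral satisfies `x_k ≤ ⌊l_k + (β − act₋(a, l, u)) / a_k⌋`. -/
theorem implied_upper_bound_rounded {n : ℕ} (a l u : Fin n → ℝ) (β : ℝ) (k : Fin n)
    (hlu : ∀ j, l j ≤ u j) (hak : 0 < a k) :
    ∀ x : Fin n → ℝ, (∀ j, l j ≤ x j) → (∀ j, x j ≤ u j) → dotProd a x ≤ β →
      (∃ z : ℤ, x k = (z : ℝ)) →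
      x k ≤ (⌊l k + (β - minActivity a l u) / a k⌋ : ℝ) := by
  intro x hlx hxu hdot ⟨z, hz⟩
  have hterm : ∀ j, (if 0 ≤ a j then a j * l j else a j * u j) ≤ a j * x j := by
    intro j
    by_cases h : 0 ≤ a j
    · simpa [h] using mul_le_mul_of_nonneg_left (hlx j) h
    · simp only [h, if_false]
      exact mul_le_mul_of_nonpos_left (hxu j) (le_of_not_ge h)
  have hsum : minActivity a l u - (if 0 ≤ a k then a k * l k else a k * u k)
      ≤ dotProd a x - a k * x k := by
    unfold minActivity dotProd
    rw [← Finset.sum_erase_eq_sub (Finset.mem_univ k),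
        ← Finset.sum_erase_eq_sub (Finset.mem_univ k)]
    exact Finset.sum_le_sum fun j _ => hterm j
  rw [if_pos hak.le] at hsum
  have hkey : a k * x k ≤ β - minActivity a l u + a k * l k := by linarith
  have hxb : x k ≤ l k + (β - minActivity a l u) / a k := by
    have h2 : (x k - l k) * a k ≤ β - minActivity a l u := by nlinarith
    have := (le_div_iff₀ hak).mpr h2
    linarith
  rw [hz] at hxb ⊢
  exact_mod_cast Int.le_floor.mpr (by exact_mod_cast hxb)
end

section
/- Let a ∈ ℝⁿ, β ∈ ℝ, and l, u ∈ ℝⁿ with l ≤ u componentwise. If act₋(a, l, u) > β, then there is no x ∈ ℝⁿ with l ≤ x ≤ u componentwise satisfying ⟨a, x⟩ ≤ β. -/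
/-- Soundness of row-infeasibility detection: if the minimal activity of the row over the
box `[l, u]` exceeds the right-hand side `β`, then no point of the box satisfies
`⟨a, x⟩ ≤ β`. -/
theorem row_infeasibility {n : ℕ} (a l u : Fin n → ℝ) (β : ℝ)
    (hlu : ∀ j, l j ≤ u j) (hinf : β < minActivity a l u) :
    ¬ ∃ x : Fin n → ℝ, (∀ j, l j ≤ x j) ∧ (∀ j, x j ≤ u j) ∧ dotProd a x ≤ β := by
  rintro ⟨x, hl, hu, hdot⟩
  have key : minActivity a l u ≤ dotProd a x := by
    apply Finset.sum_le_sum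
    intro j _
    by_cases h : 0 ≤ a j
    · simp only [h, if_true]
      exact mul_le_mul_of_nonneg_left (hl j) h
    · simp only [h, if_false]
      exact mul_le_mul_of_nonpos_left (hu j) (le_of_not_ge h)
  linarith
end

section
/- Let A be an m×n real matrix, b ∈ ℝᵐ, l, u ∈ ℝⁿ with l ≤ u componentwise, and I a set of indices in Fin n. Fix a row index i and a column index k with A_{ik} > 0, and define the tightened upper bound u'_k = min(u_k, l_k + (b_i − act₋(A_i, l, u)) / A_{ik}), with u'_j = u_j for j ≠ k, where A_i denotes the i-th row of A. Then the mixed-integer feasible set F(A, b, l, u, I) is equal to F(A, b, l, u', I); i.e., the bound-tightening step of propagation loses no feasible point. -/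
/-- The mixed-integer feasible set
`F(A, b, l, u, I) = {x : A·x ≤ b, l ≤ x ≤ u, x_i ∈ ℤ for i ∈ I}`. -/
def mipFeasible {m n : ℕ} (A : Matrix (Fin m) (Fin n) ℝ) (b : Fin m → ℝ)
    (l u : Fin n → ℝ) (I : Finset (Fin n)) : Set (Fin n → ℝ) :=
  {x | (∀ i, A.mulVec x i ≤ b i) ∧ (∀ j, l j ≤ x j) ∧ (∀ j, x j ≤ u j) ∧
    ∀ i ∈ I, ∃ z : ℤ, x i = (z : ℝ)}

/-- Soundness of the bound-tightening step of propagation: tightening the upper bound of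
variable `k` (with `A_{ik} > 0`) to
`u'_k = min(u_k, l_k + (b_i − act₋(A_i, l, u)) / A_{ik})` loses no feasible point. -/
theorem propagation_tightening_sound {m n : ℕ} (A : Matrix (Fin m) (Fin n) ℝ)
    (b : Fin m → ℝ) (l u : Fin n → ℝ) (I : Finset (Fin n))
    (i : Fin m) (k : Fin n) (hlu : ∀ j, l j ≤ u j) (hik : 0 < A i k) :
    mipFeasible A b l u I =
      mipFeasible A b l
        (Function.update u k
          (min (u k) (l k + (b i - minActivity (fun j => A i j) l u) / A i k))) I := by
  ext x
  simp only [mipFeasible, Set.mem_setOf_eq]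
  constructor
  · rintro ⟨hAx, hl, hu, hI⟩
    refine ⟨hAx, hl, ?_, hI⟩
    intro j
    by_cases hj : j = k
    · subst hj
      rw [Function.update_self]
      refine le_min (hu j) ?_
      -- key inequality
      have hrow : ∑ p, A i p * x p ≤ b i := by
        have := hAx i
        simpa [Matrix.mulVec, dotProduct] using this
      have hterm : ∀ p ∈ Finset.univ.erase j,
          (if 0 ≤ A i p then A i p * l p else A i p * u p) ≤ A i p * x p := by
        intro p _
        by_cases hs : 0 ≤ A i p
        · simp only [if_pos hs]
          exact mul_le_mul_of_nonneg_left (hl p) hs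
        · simp only [if_neg hs]
          exact mul_le_mul_of_nonpos_left (hu p) (le_of_not_ge hs)
      have hsplit1 : minActivity (fun p => A i p) l u
          = A i j * l j + ∑ p ∈ Finset.univ.erase j,
              (if 0 ≤ A i p then A i p * l p else A i p * u p) := by
        rw [minActivity, ← Finset.add_sum_erase _ _ (Finset.mem_univ j), if_pos hik.le]
      have hsplit2 : ∑ p, A i p * x p
          = A i j * x j + ∑ p ∈ Finset.univ.erase j, A i p * x p := by
        rw [← Finset.add_sum_erase _ _ (Finset.mem_univ j)]
      have hkey : A i j * x j ≤ b i - minActivity (fun p => A i p) l u + A i j * l j := by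
        have hsum := Finset.sum_le_sum hterm
        have := hrow
        rw [hsplit2] at this
        rw [hsplit1]
        linarith
      have : x j - l j ≤ (b i - minActivity (fun p => A i p) l u) / A i j := by
        rw [le_div_iff₀ hik]
        have : (x j - l j) * A i j = A i j * x j - A i j * l j := by ring
        linarith [hkey, this.le, this.ge]
      linarith
    · rw [Function.update_of_ne hj]
      exact hu j
  · rintro ⟨hAx, hl, hu, hI⟩
    refine ⟨hAx, hl, ?_, hI⟩
    intro j
    by_cases hj : j = k
    · subst hj
      have := hu j
      rw [Function.update_self] at this
      exact this.trans (min_le_left _ _)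
    · have := hu j
      rwa [Function.update_of_ne hj] at this
end
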